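/- arXiv:1512.07272 — 7 statements merged into one kernel-verified Lean document; each statement's English description precedes it below -/
import Mathlib

section
/- Let I ⊆ (0,∞) be an open interval, q < 0 and p ∈ ℝ. If f : I → (0,∞) is (p,q)-Jensen convex, i.e. f(H_p(x,y)) ≤ H_q(f(x),f(y)) for all x,y ∈ I, then f is continuous on I. -/
open Real

noncomputable def powerMean (r x y : ℝ) : ℝ :=
  if r = 0 then Real.sqrt (x * y) else ((x ^ r + y ^ r) / 2) ^ (1 / r)

/-- Bernstein–Doetsch: midpoint convex and bounded above (by 0) on a convex set implies convex. -/
lemma convexOn_of_midpoint {J : Set ℝ} (hJ : Convex ℝ J) {F : ℝ → ℝ}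
    (hbd : ∀ u ∈ J, F u ≤ 0)
    (hmid : ∀ u ∈ J, ∀ v ∈ J, F ((u + v) / 2) ≤ (F u + F v) / 2) :
    ConvexOn ℝ J F := by
  refine ⟨hJ, ?_⟩
  intro x hx y hy a b ha hb hab
  set h : ℝ → ℝ := fun t => F ((1 - t) * x + t * y) - ((1 - t) * F x + t * F y) with hh
  clear_value h
  have mem : ∀ t ∈ Set.Icc (0:ℝ) 1, (1 - t) * x + t * y ∈ J := by
    intro t ht
    have := hJ hx hy (by linarith [ht.2] : (0:ℝ) ≤ 1 - t) ht.1 (by ring)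
    simpa [smul_eq_mul] using this
  set M : ℝ := |F x| + |F y| with hM
  have hbd' : ∀ t ∈ Set.Icc (0:ℝ) 1, h t ≤ M := by
    intro t ht
    have h1 : F ((1 - t) * x + t * y) ≤ 0 := hbd _ (mem t ht)
    have h2 : -F x ≤ |F x| := neg_le_abs _
    have h3 : -F y ≤ |F y| := neg_le_abs _
    have h4 : F x ≤ |F x| := le_abs_self _
    have h5 : F y ≤ |F y| := le_abs_self _
    have ht1 := ht.1
    have ht2 := ht.2
    have e1 : (1 - t) * (-F x) ≤ (1 - t) * |F x| :=
      mul_le_mul_of_nonneg_left h2 (by linarith)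
    have e2 : t * (-F y) ≤ t * |F y| := mul_le_mul_of_nonneg_left h3 ht1
    have e3 : (1 - t) * |F x| ≤ |F x| := by nlinarith [abs_nonneg (F x)]
    have e4 : t * |F y| ≤ |F y| := by nlinarith [abs_nonneg (F y)]
    simp only [hh, hM]
    nlinarith [e1, e2, e3, e4]
  have hmid' : ∀ s ∈ Set.Icc (0:ℝ) 1, ∀ t ∈ Set.Icc (0:ℝ) 1,
      h ((s + t) / 2) ≤ (h s + h t) / 2 := by
    intro s hs t ht
    have harg : (1 - (s + t) / 2) * x + ((s + t) / 2) * y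
        = (((1 - s) * x + s * y) + ((1 - t) * x + t * y)) / 2 := by ring
    have := hmid _ (mem s hs) _ (mem t ht)
    simp only [hh]
    rw [harg]
    linarith
  have h0 : h 0 = 0 := by simp [hh]
  have h1 : h 1 = 0 := by simp [hh]
  have key : ∀ t ∈ Set.Icc (0:ℝ) 1, ∃ t' ∈ Set.Icc (0:ℝ) 1, 2 * h t ≤ h t' := by
    intro t ht
    by_cases hle : t ≤ 1 / 2
    · refine ⟨2 * t, ⟨by linarith [ht.1], by linarith⟩, ?_⟩
      have := hmid' 0 ⟨le_refl _, zero_le_one⟩ (2 * t) ⟨by linarith [ht.1], by linarith⟩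
      have ha' : (0 + 2 * t) / 2 = t := by ring
      rw [ha', h0] at this
      linarith
    · refine ⟨2 * t - 1, ⟨by linarith, by linarith [ht.2]⟩, ?_⟩
      have := hmid' (2 * t - 1) ⟨by linarith, by linarith [ht.2]⟩ 1 ⟨zero_le_one, le_refl _⟩
      have ha' : (2 * t - 1 + 1) / 2 = t := by ring
      rw [ha', h1] at this
      linarith
  -- goal: F (a*x+b*y) ≤ a * F x + b * F y, i.e. h b ≤ 0
  have hb1 : b ∈ Set.Icc (0:ℝ) 1 := ⟨hb, by linarith⟩
  have hgoal : h b ≤ 0 := by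
    by_contra hc
    push_neg at hc
    have grow : ∀ n : ℕ, ∃ t ∈ Set.Icc (0:ℝ) 1, 2 ^ n * h b ≤ h t := by
      intro n
      induction n with
      | zero => exact ⟨b, hb1, by simp⟩
      | succ n ih =>
        obtain ⟨t, ht, hle⟩ := ih
        obtain ⟨t', ht', hle'⟩ := key t ht
        refine ⟨t', ht', ?_⟩
        calc 2 ^ (n + 1) * h b = 2 * (2 ^ n * h b) := by ring
          _ ≤ 2 * h t := by linarith
          _ ≤ h t' := hle'
    obtain ⟨n, hn⟩ := pow_unbounded_of_one_lt (M / h b) (one_lt_two (α := ℝ))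
    obtain ⟨t, ht, hle⟩ := grow n
    have := hbd' t ht
    have : 2 ^ n * h b ≤ M := le_trans hle this
    rw [div_lt_iff₀ hc] at hn
    linarith
  have : F (a * x + b * y) - (a * F x + b * F y) ≤ 0 := by
    have hab' : a = 1 - b := by linarith
    simpa [hh, hab'] using hgoal
  simpa [smul_eq_mul] using this

/-- Abstract reduction: convexity through a coordinate change. -/
lemma aux_cont (q : ℝ) (hq : q < 0) (I J : Set ℝ) (hJopen : IsOpen J) (hJconv : Convex ℝ J)
    (f : ℝ → ℝ) (hfI : ∀ x ∈ I, 0 < f x)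
    (φ ψ : ℝ → ℝ)
    (hψJ : ∀ x ∈ I, ψ x ∈ J)
    (hφI : ∀ u ∈ J, φ u ∈ I)
    (hφψ : ∀ x ∈ I, φ (ψ x) = x)
    (hψcont : ContinuousOn ψ I)
    (hmean : ∀ u ∈ J, ∀ v ∈ J, f (φ ((u + v) / 2)) ≤ powerMean q (f (φ u)) (f (φ v))) :
    ContinuousOn f I := by
  have hq0 : q ≠ 0 := ne_of_lt hq
  set F : ℝ → ℝ := fun u => -(f (φ u)) ^ q with hF
  have hpos : ∀ u ∈ J, 0 < f (φ u) := fun u hu => hfI _ (hφI u hu)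
  have hbd : ∀ u ∈ J, F u ≤ 0 := by
    intro u hu
    have := Real.rpow_pos_of_pos (hpos u hu) q
    simp only [hF]; linarith
  have hmid : ∀ u ∈ J, ∀ v ∈ J, F ((u + v) / 2) ≤ (F u + F v) / 2 := by
    intro u hu v hv
    have hm : (u + v) / 2 ∈ J := by
      have h' := hJconv hu hv (by norm_num : (0:ℝ) ≤ 1/2) (by norm_num : (0:ℝ) ≤ 1/2) (by norm_num)
      simp only [smul_eq_mul] at h'
      have h2 : (u + v) / 2 = 1/2 * u + 1/2 * v := by ring
      rw [h2]; exact h'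
    have hA : 0 < f (φ u) ^ q := Real.rpow_pos_of_pos (hpos u hu) q
    have hB : 0 < f (φ v) ^ q := Real.rpow_pos_of_pos (hpos v hv) q
    have hRHS : 0 < (f (φ u) ^ q + f (φ v) ^ q) / 2 := by linarith
    have h1 : f (φ ((u + v) / 2)) ≤ ((f (φ u) ^ q + f (φ v) ^ q) / 2) ^ (1 / q) := by
      have := hmean u hu v hv
      simpa [powerMean, hq0] using this
    have h2 : (((f (φ u) ^ q + f (φ v) ^ q) / 2) ^ (1 / q)) ^ q
        = (f (φ u) ^ q + f (φ v) ^ q) / 2 := by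
      rw [one_div, Real.rpow_inv_rpow hRHS.le hq0]
    have h3 : (((f (φ u) ^ q + f (φ v) ^ q) / 2) ^ (1 / q)) ^ q ≤ f (φ ((u + v) / 2)) ^ q :=
      Real.rpow_le_rpow_of_nonpos (hpos _ hm) h1 hq.le
    rw [h2] at h3
    simp only [hF]
    linarith
  have hconvF : ConvexOn ℝ J F := convexOn_of_midpoint hJconv hbd hmid
  have hFcont : ContinuousOn F J := hconvF.continuousOn hJopen
  have hcomp : ContinuousOn (fun x => -F (ψ x)) I :=
    ((hFcont.comp hψcont hψJ).neg)
  have heq : ∀ x ∈ I, (-F (ψ x)) ^ (1 / q) = f x := by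
    intro x hx
    have : -F (ψ x) = f x ^ q := by simp [hF, hφψ x hx]
    rw [this, one_div, Real.rpow_rpow_inv (hfI x hx).le hq0]
  have hcont : ContinuousOn (fun x => (-F (ψ x)) ^ (1 / q)) I := by
    apply hcomp.rpow_const
    intro x hx
    left
    have : -F (ψ x) = f x ^ q := by simp [hF, hφψ x hx]
    rw [this]
    exact ne_of_gt (Real.rpow_pos_of_pos (hfI x hx) q)
  exact hcont.congr fun x hx => (heq x hx).symm

theorem stmt_3 (p q : ℝ) (hq : q < 0)
    (I : Set ℝ) (hIopen : IsOpen I) (hIconv : I.OrdConnected) (hIpos : I ⊆ Set.Ioi 0)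
    (f : ℝ → ℝ) (hf : ∀ x ∈ I, 0 < f x)
    (hconv : ∀ x ∈ I, ∀ y ∈ I, f (powerMean p x y) ≤ powerMean q (f x) (f y)) :
    ContinuousOn f I := by
  rcases eq_or_ne p 0 with rfl | hp
  · -- p = 0 : use exp / log
    set J : Set ℝ := Real.exp ⁻¹' I with hJ
    have hJopen : IsOpen J := hIopen.preimage Real.continuous_exp
    have hJconv : Convex ℝ J := by
      rw [convex_iff_ordConnected]
      constructor
      intro u hu v hv w hw
      exact hIconv.out hu hv ⟨Real.exp_le_exp.2 hw.1, Real.exp_le_exp.2 hw.2⟩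
    refine aux_cont q hq I J hJopen hJconv f hf Real.exp Real.log ?_ (fun u hu => hu) ?_ ?_ ?_
    · intro x hx
      simpa [hJ, Real.exp_log (hIpos hx)] using hx
    · intro x hx; exact Real.exp_log (hIpos hx)
    · intro x hx
      exact (Real.continuousAt_log (ne_of_gt (hIpos hx))).continuousWithinAt
    · intro u hu v hv
      have key : powerMean 0 (Real.exp u) (Real.exp v) = Real.exp ((u + v) / 2) := by
        rw [powerMean, if_pos rfl, show Real.exp u * Real.exp v = Real.exp (u + v) by
          rw [Real.exp_add], Real.sqrt_eq_rpow, Real.rpow_def_of_pos (Real.exp_pos _),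
          Real.log_exp]
        ring_nf
      have := hconv _ hu _ hv
      rwa [key] at this
  · -- p ≠ 0 : use u ↦ u ^ (1/p) / x ↦ x ^ p
    set φ : ℝ → ℝ := fun u => u ^ (1 / p) with hφ
    set ψ : ℝ → ℝ := fun x => x ^ p with hψ
    set J : Set ℝ := Set.Ioi 0 ∩ φ ⁻¹' I with hJ
    have hφcont : ContinuousOn φ (Set.Ioi 0) := by
      intro u hu
      exact (Real.continuousAt_rpow_const u (1/p) (Or.inl (ne_of_gt hu))).continuousWithinAt
    have hJopen : IsOpen J := hφcont.isOpen_inter_preimage isOpen_Ioi hIopen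
    have hφψ : ∀ x ∈ I, φ (ψ x) = x := by
      intro x hx
      have hx0 : 0 < x := hIpos hx
      simp only [hφ, hψ, one_div]
      exact Real.rpow_rpow_inv hx0.le hp
    have hψφ : ∀ u, 0 < u → ψ (φ u) = u := by
      intro u hu
      simp only [hφ, hψ, one_div]
      exact Real.rpow_inv_rpow hu.le hp
    have hψJ : ∀ x ∈ I, ψ x ∈ J := by
      intro x hx
      have hx0 : 0 < x := hIpos hx
      refine ⟨Real.rpow_pos_of_pos hx0 p, ?_⟩
      show φ (ψ x) ∈ I
      rw [hφψ x hx]; exact hx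
    have hφmono : ∀ u v : ℝ, 0 < u → u ≤ v → (φ u ≤ φ v ∧ 0 < φ u) ∨ (φ v ≤ φ u ∧ 0 < φ v) := by
      intro u v hu huv
      rcases lt_or_gt_of_ne hp with hneg | hpos
      · right
        have h1p : 1 / p < 0 := div_neg_of_pos_of_neg one_pos hneg
        exact ⟨Real.rpow_le_rpow_of_nonpos hu huv h1p.le,
          Real.rpow_pos_of_pos (hu.trans_le huv) _⟩
      · left
        have h1p : 0 < 1 / p := div_pos one_pos hpos
        exact ⟨Real.rpow_le_rpow hu.le huv h1p.le, Real.rpow_pos_of_pos hu _⟩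
    have hJconv : Convex ℝ J := by
      rw [convex_iff_ordConnected]
      constructor
      intro u hu v hv w hw
      have hu0 : (0:ℝ) < u := hu.1
      have hw0 : (0:ℝ) < w := lt_of_lt_of_le hu0 hw.1
      refine ⟨hw0, ?_⟩
      show φ w ∈ I
      rcases hφmono u w hu0 hw.1 with ⟨h1, _⟩ | ⟨h1, _⟩ <;>
        rcases hφmono w v hw0 hw.2 with ⟨h2, _⟩ | ⟨h2, _⟩
      · exact hIconv.out hu.2 hv.2 ⟨h1, h2⟩
      · -- φ u ≤ φ w and φ v ≤ φ w : impossible unless equal... handle via monotone direction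
        -- In fact for fixed sign of p both cases align; but cover anyway:
        rcases lt_or_gt_of_ne hp with hneg | hpos
        · -- p < 0: φ antitone, so first should have been right case; derive φ w ≤ φ u
          have h1' : φ w ≤ φ u := Real.rpow_le_rpow_of_nonpos hu0 hw.1
            (div_neg_of_pos_of_neg one_pos hneg).le
          exact hIconv.out hv.2 hu.2 ⟨h2, h1'⟩
        · have h2' : φ w ≤ φ v := Real.rpow_le_rpow hw0.le hw.2
            (div_pos one_pos hpos).le
          exact hIconv.out hu.2 hv.2 ⟨h1, h2'⟩
      · rcases lt_or_gt_of_ne hp with hneg | hpos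
        · have h2' : φ v ≤ φ w := Real.rpow_le_rpow_of_nonpos hw0 hw.2
            (div_neg_of_pos_of_neg one_pos hneg).le
          exact hIconv.out hv.2 hu.2 ⟨h2', h1⟩
        · have h1' : φ u ≤ φ w := Real.rpow_le_rpow hu0.le hw.1
            (div_pos one_pos hpos).le
          exact hIconv.out hu.2 hv.2 ⟨h1', h2⟩
      · exact hIconv.out hv.2 hu.2 ⟨h2, h1⟩
    refine aux_cont q hq I J hJopen hJconv f hf φ ψ hψJ (fun u hu => hu.2) hφψ ?_ ?_
    · intro x hx
      exact (Real.continuousAt_rpow_const x p (Or.inl (ne_of_gt (hIpos hx)))).continuousWithinAt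
    · intro u hu v hv
      have key : powerMean p (φ u) (φ v) = φ ((u + v) / 2) := by
        have h1 : (φ u) ^ p = u := by have := hψφ u hu.1; simpa [hψ] using this
        have h2 : (φ v) ^ p = v := by have := hψφ v hv.1; simpa [hψ] using this
        rw [powerMean, if_neg hp, h1, h2]
      have := hconv _ hu.2 _ hv.2
      rwa [key] at this
end

section
/- If a Jensen convex function g : U → ℝ on an open convex set U ⊆ ℝ satisfies g ≤ 0 on U, then g is convex (and hence continuous) on U. -/
/-! Fix `x, y ∈ U` and restrict to the segment between them: `φ t = g (lineMap x y t) - lineMap (g x) (g y) t`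
is midpoint convex and bounded above on `[0, 1]` and nonpositive at the endpoints. Midpoint convexity against
the endpoint `0` (resp. `1`) gives `2 φ t ≤ φ (2t)` for `t ≤ 1/2` (resp. `2 φ t ≤ φ (2t - 1)` for `t ≥ 1/2`),
so a positive value of `φ` would double along the orbit of the doubling map, contradicting the upper bound.
Hence `φ ≤ 0`, which is convexity; continuity follows from convexity on an open set. -/

open Set AffineMap

lemma Real.midpoint_eq_add_div_two (a b : ℝ) : midpoint ℝ a b = (a + b) / 2 := by
  rw [midpoint_eq_smul_add, invOf_eq_inv, smul_eq_mul]
  ring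

section MidpointConvex

variable {φ : ℝ → ℝ}

lemma exists_two_mul_le_of_midpoint_le
    (hmid : ∀ u ∈ Icc (0 : ℝ) 1, ∀ v ∈ Icc (0 : ℝ) 1, φ (midpoint ℝ u v) ≤ (φ u + φ v) / 2)
    (h₀ : φ 0 ≤ 0) (h₁ : φ 1 ≤ 0) {t : ℝ} (ht : t ∈ Icc (0 : ℝ) 1) :
    ∃ t' ∈ Icc (0 : ℝ) 1, 2 * φ t ≤ φ t' := by
  obtain ⟨ht₀, ht₁⟩ := ht
  rcases le_total t (1 / 2) with ht' | ht'
  · refine ⟨2 * t, ⟨by linarith, by linarith⟩, ?_⟩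
    have := hmid 0 (by simp) (2 * t) ⟨by linarith, by linarith⟩
    rw [Real.midpoint_eq_add_div_two, zero_add, mul_div_cancel_left₀ t two_ne_zero] at this
    linarith
  · refine ⟨2 * t - 1, ⟨by linarith, by linarith⟩, ?_⟩
    have := hmid (2 * t - 1) ⟨by linarith, by linarith⟩ 1 (by simp)
    rw [Real.midpoint_eq_add_div_two, sub_add_cancel, mul_div_cancel_left₀ t two_ne_zero] at this
    linarith

lemma exists_two_pow_mul_le_of_midpoint_le
    (hmid : ∀ u ∈ Icc (0 : ℝ) 1, ∀ v ∈ Icc (0 : ℝ) 1, φ (midpoint ℝ u v) ≤ (φ u + φ v) / 2)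
    (h₀ : φ 0 ≤ 0) (h₁ : φ 1 ≤ 0) {t : ℝ} (ht : t ∈ Icc (0 : ℝ) 1) (n : ℕ) :
    ∃ t' ∈ Icc (0 : ℝ) 1, 2 ^ n * φ t ≤ φ t' := by
  induction n with
  | zero => exact ⟨t, ht, by simp⟩
  | succ n ih =>
    obtain ⟨t', ht', hle⟩ := ih
    obtain ⟨t'', ht'', hle'⟩ := exists_two_mul_le_of_midpoint_le hmid h₀ h₁ ht'
    exact ⟨t'', ht'', by rw [pow_succ']; linarith⟩

lemma nonpos_of_midpoint_le_of_bddAbove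
    (hmid : ∀ u ∈ Icc (0 : ℝ) 1, ∀ v ∈ Icc (0 : ℝ) 1, φ (midpoint ℝ u v) ≤ (φ u + φ v) / 2)
    (h₀ : φ 0 ≤ 0) (h₁ : φ 1 ≤ 0) (hbdd : BddAbove (φ '' Icc 0 1)) {t : ℝ}
    (ht : t ∈ Icc (0 : ℝ) 1) : φ t ≤ 0 := by
  by_contra! hpos
  obtain ⟨M, hM⟩ := hbdd
  obtain ⟨n, hn⟩ := pow_unbounded_of_one_lt (M / φ t) one_lt_two
  obtain ⟨t', ht', hle⟩ := exists_two_pow_mul_le_of_midpoint_le hmid h₀ h₁ ht n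
  have : M < 2 ^ n * φ t := (div_lt_iff₀ hpos).mp hn
  linarith [hM (mem_image_of_mem φ ht')]

end MidpointConvex

theorem convexOn_of_midpoint_le_of_bddAbove {E : Type*} [AddCommGroup E] [Module ℝ E] {s : Set E} {g : E → ℝ} (hs : Convex ℝ s)
    (hmid : ∀ u ∈ s, ∀ v ∈ s, g (midpoint ℝ u v) ≤ (g u + g v) / 2)
    (hbdd : BddAbove (g '' s)) : ConvexOn ℝ s g := by
  refine ⟨hs, fun x hx y hy a b ha hb hab => ?_⟩
  set φ : ℝ → ℝ := fun t => g (lineMap x y t) - lineMap (g x) (g y) t with hφ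
  have hmem : ∀ t ∈ Icc (0 : ℝ) 1, lineMap x y t ∈ s := fun t ht => hs.lineMap_mem hx hy ht
  have hφmid : ∀ u ∈ Icc (0 : ℝ) 1, ∀ v ∈ Icc (0 : ℝ) 1,
      φ (midpoint ℝ u v) ≤ (φ u + φ v) / 2 := by
    intro u hu v hv
    have hℓ : lineMap (g x) (g y) (midpoint ℝ u v)
        = (lineMap (g x) (g y) u + lineMap (g x) (g y) v) / 2 := by
      rw [AffineMap.map_midpoint, Real.midpoint_eq_add_div_two]
    have := hmid _ (hmem u hu) _ (hmem v hv)
    rw [← AffineMap.map_midpoint] at this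
    simp only [hφ, hℓ]
    linarith
  have hφbdd : BddAbove (φ '' Icc 0 1) := by
    obtain ⟨M, hM⟩ := hbdd
    refine ⟨M - min (g x) (g y), ?_⟩
    rintro _ ⟨t, ht, rfl⟩
    have hlow : min (g x) (g y) ≤ lineMap (g x) (g y) t := by
      have := lineMap_mono_endpoints (r := t) (min_le_left (g x) (g y)) (min_le_right (g x) (g y))
        ht.1 ht.2
      rwa [lineMap_same_apply] at this
    linarith [hM (mem_image_of_mem g (hmem t ht))]
  have hb : b ∈ Icc (0 : ℝ) 1 := ⟨hb, by linarith⟩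
  have hφb := nonpos_of_midpoint_le_of_bddAbove hφmid (by simp [hφ]) (by simp [hφ]) hφbdd hb
  simp only [hφ, lineMap_apply_module, smul_eq_mul, ← eq_sub_of_add_eq hab] at hφb ⊢
  linarith

theorem stmt_4 (U : Set ℝ) (hUopen : IsOpen U) (hUconv : Convex ℝ U)
    (g : ℝ → ℝ) (hg : ∀ u ∈ U, ∀ v ∈ U, g ((u + v) / 2) ≤ (g u + g v) / 2)
    (hle : ∀ u ∈ U, g u ≤ 0) :
    ConvexOn ℝ U g ∧ ContinuousOn g U := by
  have hconv : ConvexOn ℝ U g := by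
    refine convexOn_of_midpoint_le_of_bddAbove hUconv ?_ ⟨0, ?_⟩
    · simpa only [Real.midpoint_eq_add_div_two] using hg
    · rintro _ ⟨u, hu, rfl⟩
      exact hle u hu
  exact ⟨hconv, hconv.continuousOn hUopen⟩
end

section
/- For any derivation d : ℝ → ℝ and any α > 0, the function F(x) = x^α · exp(d(x)/x) satisfies F((x+y)/2) ≤ ((F(x)^(1/α) + F(y)^(1/α))/2)^α for all x,y > 0, i.e. F is (1, 1/α)-Jensen convex. -/
open Real

theorem stmt_9 (d : ℝ → ℝ)
    (hadd : ∀ x y : ℝ, d (x + y) = d x + d y)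
    (hleib : ∀ x y : ℝ, d (x * y) = x * d y + y * d x)
    (α : ℝ) (hα : 0 < α)
    (F : ℝ → ℝ) (hF : ∀ x > 0, F x = x ^ α * Real.exp (d x / x)) :
    ∀ x > 0, ∀ y > 0,
      F ((x + y) / 2) ≤ ((F x ^ (1 / α) + F y ^ (1 / α)) / 2) ^ α := by
  have hα' : α ≠ 0 := ne_of_gt hα
  have hd1 : d 1 = 0 := by have := hleib 1 1; simp at this; linarith
  have hd2 : d 2 = 0 := by
    have := hadd 1 1; norm_num [hd1] at this; exact this
  intro x hx y hy
  set m := (x + y) / 2 with hm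
  have hm0 : 0 < m := by positivity
  have hdm : d m = (d x + d y) / 2 := by
    have h1 : d (x + y) = d x + d y := hadd x y
    have h2 : x + y = 2 * m := by rw [hm]; ring
    have h3 : d (2 * m) = 2 * d m + m * d 2 := hleib 2 m
    rw [h2, h3, hd2] at h1; linarith
  set u := d x / (α * x) with hu
  set v := d y / (α * y) with hv
  -- the key rpow-free inequality via convexity of exp
  have hxy : 0 < x + y := by linarith
  have hwsum : x / (x + y) + y / (x + y) = 1 := by field_simp
  have hconv := convexOn_exp.2 (Set.mem_univ u) (Set.mem_univ v)
      (by positivity : (0:ℝ) ≤ x / (x + y)) (by positivity : (0:ℝ) ≤ y / (x + y)) hwsum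
  simp only [smul_eq_mul] at hconv
  have hweq : x / (x + y) * u + y / (x + y) * v = d m / (α * m) := by
    rw [hu, hv, hdm, hm]
    field_simp
  rw [hweq] at hconv
  have key : m * Real.exp (d m / (α * m)) ≤ (x * Real.exp u + y * Real.exp v) / 2 := by
    have := mul_le_mul_of_nonneg_left hconv hm0.le
    calc m * Real.exp (d m / (α * m))
        ≤ m * (x / (x + y) * Real.exp u + y / (x + y) * Real.exp v) := this
      _ = (x * Real.exp u + y * Real.exp v) / 2 := by
          rw [hm]; field_simp
  -- rewrite F values
  have hFpow : ∀ z : ℝ, 0 < z → F z ^ (1 / α) = z * Real.exp (d z / (α * z)) := by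
    intro z hz
    rw [hF z hz, Real.mul_rpow (by positivity) (Real.exp_nonneg _),
      ← Real.rpow_mul hz.le, mul_one_div, div_self hα', Real.rpow_one,
      Real.rpow_def_of_pos (Real.exp_pos _), Real.log_exp]
    have : d z / z * (1 / α) = d z / (α * z) := by
      rw [div_mul_div_comm, mul_one, mul_comm z α]
    rw [this]
  have hFm : F m = (m * Real.exp (d m / (α * m))) ^ α := by
    rw [hF m hm0, Real.mul_rpow hm0.le (Real.exp_nonneg _),
      Real.rpow_def_of_pos (Real.exp_pos _), Real.log_exp]
    have : d m / (α * m) * α = d m / m := by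
      field_simp
    rw [this]
  rw [hFm, hFpow x hx, hFpow y hy]
  exact Real.rpow_le_rpow (by positivity) key hα.le
end

section
/- If d : ℝ → ℝ is a nonzero derivation and α ≥ 1, then the function F(x) = x^α · exp(d(x)/x) on (0,∞) is multiplicative, Jensen convex (F((x+y)/2) ≤ (F(x)+F(y))/2 for all x,y > 0), and discontinuous. -/
open Real

private lemma aux_entropy (l m : ℝ) (hl : 0 < l) (hm : 0 < m) (hlm : l + m = 1) :
    0 ≤ l * Real.log l + m * Real.log m + Real.log 2 := by
  have h1 : Real.log ((2*l)⁻¹) ≤ (2*l)⁻¹ - 1 := Real.log_le_sub_one_of_pos (by positivity)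
  have h2 : Real.log ((2*m)⁻¹) ≤ (2*m)⁻¹ - 1 := Real.log_le_sub_one_of_pos (by positivity)
  rw [Real.log_inv, Real.log_mul two_ne_zero hl.ne'] at h1
  rw [Real.log_inv, Real.log_mul two_ne_zero hm.ne'] at h2
  have h1' : l * (1 - (2*l)⁻¹) ≤ l * (Real.log 2 + Real.log l) :=
    mul_le_mul_of_nonneg_left (by linarith) hl.le
  have h2' : m * (1 - (2*m)⁻¹) ≤ m * (Real.log 2 + Real.log m) :=
    mul_le_mul_of_nonneg_left (by linarith) hm.le
  have e1 : l * (1 - (2*l)⁻¹) = l - 1/2 := by field_simp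
  have e2 : m * (1 - (2*m)⁻¹) = m - 1/2 := by field_simp
  rw [e1, mul_add] at h1'
  rw [e2, mul_add] at h2'
  have e3 : l * Real.log 2 + m * Real.log 2 = Real.log 2 := by
    linear_combination Real.log 2 * hlm
  linarith

private lemma aux_core (α l m a b T : ℝ) (hα : 1 ≤ α) (hl : 0 < l) (hm : 0 < m)
    (hlm : l + m = 1) :
    2 * Real.exp ((T - Real.log 2) * α + (l*a + m*b)) ≤
      Real.exp ((Real.log l + T) * α + a) + Real.exp ((Real.log m + T) * α + b) := by
  have hE := aux_entropy l m hl hm hlm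
  set u : ℝ := (Real.log l + T) * α + a with hu_def
  set v : ℝ := (Real.log m + T) * α + b with hv_def
  have key := Real.geom_mean_le_arith_mean2_weighted hl.le hm.le
      (le_of_lt (by positivity : (0:ℝ) < Real.exp u / l))
      (le_of_lt (by positivity : (0:ℝ) < Real.exp v / m)) hlm
  have eu : Real.exp u / l = Real.exp (u - Real.log l) := by
    rw [Real.exp_sub, Real.exp_log hl]
  have ev : Real.exp v / m = Real.exp (v - Real.log m) := by
    rw [Real.exp_sub, Real.exp_log hm]
  rw [eu, ev, ← Real.exp_mul, ← Real.exp_mul, ← Real.exp_add] at key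
  have hlu : l * Real.exp (u - Real.log l) = Real.exp u := by
    rw [← eu]; field_simp
  have hmv : m * Real.exp (v - Real.log m) = Real.exp v := by
    rw [← ev]; field_simp
  rw [hlu, hmv] at key
  have hmain : Real.log 2 + ((T - Real.log 2) * α + (l*a + m*b))
      ≤ (u - Real.log l) * l + (v - Real.log m) * m := by
    have hid : (u - Real.log l) * l + (v - Real.log m) * m
        - (Real.log 2 + ((T - Real.log 2) * α + (l*a + m*b)))
        = (α - 1) * (l * Real.log l + m * Real.log m + Real.log 2) := by
      rw [hu_def, hv_def]
      linear_combination (α * T) * hlm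
    nlinarith [mul_nonneg (by linarith : (0:ℝ) ≤ α - 1) hE]
  have h2e : 2 * Real.exp ((T - Real.log 2) * α + (l*a + m*b))
      = Real.exp (Real.log 2 + ((T - Real.log 2) * α + (l*a + m*b))) := by
    rw [Real.exp_add (Real.log 2), Real.exp_log two_pos]
  rw [h2e]
  exact (Real.exp_le_exp.mpr hmain).trans key

private lemma aux_conv (α x y a b : ℝ) (hα : 1 ≤ α) (hx : 0 < x) (hy : 0 < y) :
    ((x+y)/2) ^ α * Real.exp ((x*a + y*b)/(x+y)) ≤
      (x ^ α * Real.exp a + y ^ α * Real.exp b) / 2 := by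
  have hs : 0 < x + y := by positivity
  have hl : 0 < x / (x+y) := by positivity
  have hm : 0 < y / (x+y) := by positivity
  have hlm : x/(x+y) + y/(x+y) = 1 := by field_simp
  have H := aux_core α (x/(x+y)) (y/(x+y)) a b (Real.log (x+y)) hα hl hm hlm
  have e1 : (Real.log (x/(x+y)) + Real.log (x+y)) * α + a = Real.log x * α + a := by
    rw [Real.log_div hx.ne' hs.ne']; ring
  have e2 : (Real.log (y/(x+y)) + Real.log (x+y)) * α + b = Real.log y * α + b := by
    rw [Real.log_div hy.ne' hs.ne']; ring
  have e3 : (Real.log (x+y) - Real.log 2) * α + (x/(x+y)*a + y/(x+y)*b)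
      = Real.log ((x+y)/2) * α + (x*a + y*b)/(x+y) := by
    rw [Real.log_div hs.ne' two_ne_zero]; ring
  rw [e1, e2, e3] at H
  rw [Real.rpow_def_of_pos (by positivity : (0:ℝ) < (x+y)/2),
      Real.rpow_def_of_pos hx, Real.rpow_def_of_pos hy,
      ← Real.exp_add, ← Real.exp_add, ← Real.exp_add]
  linarith

theorem stmt_12 (d : ℝ → ℝ)
    (hadd : ∀ x y : ℝ, d (x + y) = d x + d y)
    (hleib : ∀ x y : ℝ, d (x * y) = x * d y + y * d x)
    (hne : d ≠ 0)
    (α : ℝ) (hα : 1 ≤ α)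
    (F : ℝ → ℝ) (hF : ∀ x > 0, F x = x ^ α * Real.exp (d x / x)) :
    (∀ x > 0, ∀ y > 0, F (x * y) = F x * F y) ∧
    (∀ x > 0, ∀ y > 0, F ((x + y) / 2) ≤ (F x + F y) / 2) ∧
    ¬ ContinuousOn F (Set.Ioi 0) := by
  have hd0 : d 0 = 0 := by have := hadd 0 0; simp at this; linarith
  have hd1 : d 1 = 0 := by have := hleib 1 1; simp at this; linarith
  have hdneg : ∀ x : ℝ, d (-x) = - d x := by
    intro x
    have := hadd x (-x)
    simp [hd0] at this
    linarith
  have hdnat : ∀ n : ℕ, d n = 0 := by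
    intro n
    induction n with
    | zero => simpa using hd0
    | succ k ih => push_cast; rw [hadd]; simp [ih, hd1]
  have hdinv : ∀ x : ℝ, x ≠ 0 → d x = 0 → d x⁻¹ = 0 := by
    intro x hx hdx
    have h := hleib x x⁻¹
    rw [mul_inv_cancel₀ hx, hd1, hdx] at h
    have hx' : x * d x⁻¹ = 0 := by linarith
    rcases mul_eq_zero.mp hx' with h' | h'
    · exact absurd h' hx
    · exact h'
  have hdint : ∀ n : ℤ, d n = 0 := by
    intro n
    rcases n with k | k
    · simpa using hdnat k
    · push_cast
      rw [show -((k:ℝ)+1) = -(((k+1:ℕ):ℝ)) by push_cast; ring, hdneg]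
      have := hdnat (k+1); push_cast at this ⊢; linarith
  have hdq : ∀ q : ℚ, d q = 0 := by
    intro q
    have hden : ((q.den : ℝ)) ≠ 0 := Nat.cast_ne_zero.mpr q.den_nz
    have h1 : d ((q.den : ℝ))⁻¹ = 0 := hdinv _ hden (hdnat q.den)
    have h2 : d ((q.num : ℝ)) = 0 := hdint q.num
    rw [Rat.cast_def, div_eq_mul_inv, hleib, h1, h2]
    ring
  have hdhalf : ∀ x : ℝ, d (x / 2) = d x / 2 := by
    intro x
    have h12 : d ((2:ℝ)⁻¹) = 0 := hdinv 2 two_ne_zero (by exact_mod_cast hdnat 2)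
    rw [div_eq_mul_inv, hleib, h12]
    ring
  refine ⟨?_, ?_, ?_⟩
  · -- multiplicative
    intro x hx y hy
    rw [hF _ (mul_pos hx hy), hF x hx, hF y hy, Real.mul_rpow hx.le hy.le, hleib]
    rw [show (x * d y + y * d x)/(x*y) = d x / x + d y / y by
      field_simp; ring, Real.exp_add]
    ring
  · -- Jensen convex
    intro x hx y hy
    have hxy2 : (0:ℝ) < (x+y)/2 := by positivity
    rw [hF _ hxy2, hF x hx, hF y hy]
    have hde : d ((x+y)/2) / ((x+y)/2) = (x * (d x / x) + y * (d y / y))/(x+y) := by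
      rw [hdhalf, hadd]
      have hxy : x + y ≠ 0 := by positivity
      field_simp
    rw [hde]
    exact aux_conv α x y (d x / x) (d y / y) hα hx hy
  · -- discontinuous
    intro hcont
    obtain ⟨x₁, hx₁⟩ : ∃ x, d x ≠ 0 := by
      by_contra h
      push_neg at h
      exact hne (funext fun x => h x)
    have hx₁0 : x₁ ≠ 0 := fun h => hx₁ (h ▸ hd0)
    obtain ⟨x₀, hx₀pos, hdx₀⟩ : ∃ x₀, 0 < x₀ ∧ d x₀ ≠ 0 := by
      rcases lt_or_gt_of_ne hx₁0 with h | h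
      · exact ⟨-x₁, by linarith, by rw [hdneg]; simpa using hx₁⟩
      · exact ⟨x₁, h, hx₁⟩
    have hFpos : ∀ x ∈ Set.Ioi (0:ℝ), F x ≠ 0 := by
      intro x hx
      have hx' : (0:ℝ) < x := hx
      rw [hF x hx']
      positivity
    have hdc : ContinuousOn d (Set.Ioi 0) := by
      have hc : ContinuousOn (fun x : ℝ => x * (Real.log (F x) - α * Real.log x))
          (Set.Ioi 0) := by
        apply continuousOn_id.mul
        apply ContinuousOn.sub (hcont.log hFpos)
        exact continuousOn_const.mul (Real.continuousOn_log.mono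
          (fun x hx => Set.mem_compl_singleton_iff.mpr (ne_of_gt hx)))
      apply hc.congr
      intro x hx
      have hx' : (0:ℝ) < x := hx
      show d x = x * (Real.log (F x) - α * Real.log x)
      rw [hF x hx', Real.log_mul (by positivity) (Real.exp_ne_zero _),
        Real.log_rpow hx', Real.log_exp]
      field_simp
      ring
    have hq : ∀ n : ℕ, ∃ q : ℚ, x₀ < (q:ℝ) ∧ (q:ℝ) < x₀ + 1/((n:ℝ)+1) := by
      intro n
      apply exists_rat_btwn
      have : (0:ℝ) < 1/((n:ℝ)+1) := by positivity
      linarith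
    choose q hq1 hq2 using hq
    have htend : Filter.Tendsto (fun n : ℕ => ((q n : ℝ))) Filter.atTop (nhds x₀) := by
      have h1 : Filter.Tendsto (fun n : ℕ => x₀ + 1/((n:ℝ)+1)) Filter.atTop
          (nhds (x₀ + 0)) :=
        tendsto_const_nhds.add tendsto_one_div_add_atTop_nhds_zero_nat
      rw [add_zero] at h1
      exact tendsto_of_tendsto_of_tendsto_of_le_of_le tendsto_const_nhds h1
        (fun n => (hq1 n).le) (fun n => (hq2 n).le)
    have htend' : Filter.Tendsto (fun n : ℕ => ((q n : ℝ))) Filter.atTop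
        (nhdsWithin x₀ (Set.Ioi 0)) :=
      tendsto_nhdsWithin_of_tendsto_nhds_of_eventually_within _ htend
        (Filter.Eventually.of_forall fun n => lt_trans hx₀pos (hq1 n))
    have hlim : Filter.Tendsto (fun n : ℕ => d ((q n : ℝ))) Filter.atTop (nhds (d x₀)) :=
      ((hdc x₀ (Set.mem_Ioi.mpr hx₀pos)).tendsto).comp htend'
    have hzero : (fun n : ℕ => d ((q n : ℝ))) = fun _ => (0:ℝ) :=
      funext fun n => hdq (q n)
    rw [hzero] at hlim
    exact hdx₀ (tendsto_nhds_unique hlim tendsto_const_nhds)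
end

section
/- Let m : (0,∞) → (0,∞) be multiplicative. If there exists an additive function a : ℝ → ℝ such that m(t) ≥ 1 + a(t−1) for all t > 0, then m is Jensen convex: m((x+y)/2) ≤ (m(x)+m(y))/2 for all x,y > 0. -/
theorem stmt_14 (m : ℝ → ℝ) (hm : ∀ x > 0, 0 < m x)
    (hmul : ∀ x > 0, ∀ y > 0, m (x * y) = m x * m y)
    (a : ℝ → ℝ) (haadd : ∀ u v : ℝ, a (u + v) = a u + a v)
    (hsupp : ∀ t > 0, 1 + a (t - 1) ≤ m t) :
    ∀ x > 0, ∀ y > 0, m ((x + y) / 2) ≤ (m x + m y) / 2 := by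
  intro x hx y hy
  set s := (x + y) / 2 with hs
  have hspos : 0 < s := by positivity
  have ha0 : a 0 = 0 := by have := haadd 0 0; simp at this; linarith
  have hxs : 0 < x / s := div_pos hx hspos
  have hys : 0 < y / s := div_pos hy hspos
  have hmx : m x = m (x / s) * m s := by
    rw [← hmul (x / s) hxs s hspos, div_mul_cancel₀ _ hspos.ne']
  have hmy : m y = m (y / s) * m s := by
    rw [← hmul (y / s) hys s hspos, div_mul_cancel₀ _ hspos.ne']
  have h1 := hsupp (x / s) hxs
  have h2 := hsupp (y / s) hys
  have hsum : a (x / s - 1) + a (y / s - 1) = 0 := by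
    rw [← haadd]
    have h : x / s - 1 + (y / s - 1) = 0 := by
      field_simp
      ring
    rw [h, ha0]
  have hms := hm s hspos
  nlinarith [hms, h1, h2, hsum, hmx, hmy]
end

section
/- Let m : (0,∞) → (0,∞) be multiplicative and Jensen convex. Then there exists an additive function a : ℝ → ℝ such that m(t) ≥ 1 + a(t−1) for all t > 0. -/
noncomputable def dd (m : ℝ → ℝ) (n : ℕ) (u : ℝ) : ℝ := 2 ^ n * (m (1 + u / 2 ^ n) - 1)

noncomputable def aa (m : ℝ → ℝ) (u : ℝ) : ℝ :=
  sInf {r : ℝ | ∃ n : ℕ, |u| < 2 ^ n ∧ r = dd m n u}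

theorem stmt_15 (m : ℝ → ℝ) (hm : ∀ x > 0, 0 < m x)
    (hmul : ∀ x > 0, ∀ y > 0, m (x * y) = m x * m y)
    (hconv : ∀ x > 0, ∀ y > 0, m ((x + y) / 2) ≤ (m x + m y) / 2) :
    ∃ a : ℝ → ℝ, (∀ u v : ℝ, a (u + v) = a u + a v) ∧
      ∀ t > 0, 1 + a (t - 1) ≤ m t := by
  have p2 : ∀ n : ℕ, (0:ℝ) < 2 ^ n := fun n => pow_pos two_pos n
  have p2' : ∀ n : ℕ, (1:ℝ) ≤ 2 ^ n := fun n => one_le_pow₀ one_le_two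
  have h1 : m 1 = 1 := by
    have h2 := hmul 1 one_pos 1 one_pos
    have h := hm 1 one_pos
    rw [mul_one] at h2
    nlinarith
  have hpos01 : ∀ (k : ℕ) (w : ℝ), 0 < 1 + w → 0 < 1 + w / 2 ^ k := by
    intro k w hw
    rcases le_or_gt 0 w with h | h
    · have : 0 ≤ w / 2 ^ k := div_nonneg h (p2 k).le
      linarith
    · have h2 : w ≤ w / 2 ^ k := by
        rw [le_div_iff₀ (p2 k)]
        nlinarith [p2' k]
      linarith
  have hFd : ∀ (k : ℕ) (w : ℝ), 0 < 1 + w →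
      m (1 + w / 2 ^ k) ≤ 1 + (m (1 + w) - 1) / 2 ^ k := by
    intro k w hw
    induction k with
    | zero => simp
    | succ k ih =>
      have hk := hpos01 k w hw
      have e : 1 + w / 2 ^ (k+1) = ((1 + w / 2 ^ k) + 1) / 2 := by
        rw [pow_succ]; field_simp; ring
      have hc := hconv (1 + w / 2 ^ k) hk 1 one_pos
      rw [h1] at hc
      have e2 : (m (1 + w) - 1) / 2 ^ (k+1) = ((m (1 + w) - 1) / 2 ^ k) / 2 := by
        rw [pow_succ]; ring
      rw [e, e2]
      linarith
  have hmono : ∀ (u : ℝ) (n k : ℕ), n ≤ k → 0 < 1 + u / 2 ^ n → dd m k u ≤ dd m n u := by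
    intro u n k hnk hp
    obtain ⟨j, rfl⟩ : ∃ j, k = n + j := ⟨k - n, by omega⟩
    have h := hFd j (u / 2 ^ n) hp
    have e : u / 2 ^ n / 2 ^ j = u / 2 ^ (n + j) := by
      rw [div_div, ← pow_add]
    rw [e] at h
    unfold dd
    have h3 : m (1 + u / 2 ^ (n + j)) - 1 ≤ (m (1 + u / 2 ^ n) - 1) / 2 ^ j := by linarith
    calc 2^(n+j) * (m (1 + u/2^(n+j)) - 1)
        ≤ 2^(n+j) * ((m (1 + u/2^n) - 1) / 2 ^ j) :=
          mul_le_mul_of_nonneg_left h3 (p2 (n+j)).le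
      _ = 2^n * (m (1 + u/2^n) - 1) := by rw [pow_add]; field_simp
  have hadm : ∀ (u : ℝ) (n : ℕ), |u| < 2 ^ n → 0 < 1 + u / 2 ^ n := by
    intro u n h
    have h' := abs_lt.mp h
    have : -1 < u / 2 ^ n := by
      rw [lt_div_iff₀ (p2 n)]
      linarith [h'.1]
    linarith
  have hpair : ∀ (u : ℝ) (n : ℕ), |u| < 2 ^ n → 0 ≤ dd m n u + dd m n (-u) := by
    intro u n h
    have hx := hadm u n h
    have hy := hadm (-u) n (by rwa [abs_neg])
    have hc := hconv (1 + u / 2 ^ n) hx (1 + (-u) / 2 ^ n) hy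
    have e : (1 + u / 2 ^ n + (1 + (-u) / 2 ^ n)) / 2 = 1 := by
      field_simp; ring
    rw [e, h1] at hc
    unfold dd
    nlinarith [p2 n]
  have hne : ∀ u : ℝ, {r : ℝ | ∃ n : ℕ, |u| < 2 ^ n ∧ r = dd m n u}.Nonempty := by
    intro u
    obtain ⟨N, hN⟩ := pow_unbounded_of_one_lt |u| one_lt_two
    exact ⟨dd m N u, N, hN, rfl⟩
  have hbdd : ∀ u : ℝ, BddBelow {r : ℝ | ∃ n : ℕ, |u| < 2 ^ n ∧ r = dd m n u} := by
    intro u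
    obtain ⟨N, hN⟩ := pow_unbounded_of_one_lt |u| one_lt_two
    refine ⟨-(dd m N (-u)), ?_⟩
    rintro r ⟨n, hn, rfl⟩
    rcases le_total n N with h | h
    · have h1' := hmono u n N h (hadm u n hn)
      have h2' := hpair u N hN
      linarith
    · have h1' := hmono (-u) N n h (hadm (-u) N (by rwa [abs_neg]))
      have h2' := hpair u n hn
      linarith
  have hle : ∀ (u : ℝ) (n : ℕ), |u| < 2 ^ n → aa m u ≤ dd m n u :=
    fun u n hn => csInf_le (hbdd u) ⟨n, hn, rfl⟩
  have happrox : ∀ (u : ℝ) (ε : ℝ), 0 < ε → ∃ n : ℕ, |u| < 2 ^ n ∧ dd m n u < aa m u + ε := by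
    intro u ε hε
    have hlt : aa m u < aa m u + ε := by linarith
    obtain ⟨r, hrmem, hr⟩ := (csInf_lt_iff (hbdd u) (hne u)).mp hlt
    obtain ⟨n, hn, rfl⟩ := hrmem
    exact ⟨n, hn, hr⟩
  have hstep2 : ∀ (u v : ℝ) (n : ℕ), |u| < 2 ^ n → |v| < 2 ^ n →
      dd m (n+1) (u+v) ≤ dd m n u + dd m n v := by
    intro u v n hu hv
    have hx := hadm u n hu
    have hy := hadm v n hv
    have hc := hconv (1 + u / 2 ^ n) hx (1 + v / 2 ^ n) hy
    have e : (1 + u / 2 ^ n + (1 + v / 2 ^ n)) / 2 = 1 + (u + v) / 2 ^ (n+1) := by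
      rw [pow_succ]; field_simp; ring
    rw [e] at hc
    have h3 := mul_le_mul_of_nonneg_left hc (p2 (n+1)).le
    unfold dd
    have e2 : (2:ℝ) ^ (n+1) = 2 ^ n * 2 := pow_succ 2 n
    rw [e2] at h3 ⊢
    nlinarith [h3]
  have hdz : ∀ n : ℕ, dd m n 0 = 0 := by
    intro n; unfold dd; simp [h1]
  have hzero : aa m 0 = 0 := by
    have le1 : aa m 0 ≤ 0 := by
      have := hle 0 0 (by norm_num)
      rwa [hdz 0] at this
    have le2 : 0 ≤ aa m 0 := by
      apply le_csInf (hne 0)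
      rintro r ⟨n, hn, rfl⟩
      exact (hdz n).ge
    linarith
  have key0 : ∀ x : ℝ, (∀ ε : ℝ, 0 < ε → x ≤ ε) → x ≤ 0 := by
    intro x h
    by_contra hx
    push_neg at hx
    have := h (x/2) (by linarith)
    linarith
  have hsub : ∀ u v : ℝ, aa m (u + v) ≤ aa m u + aa m v := by
    intro u v
    have : aa m (u + v) - (aa m u + aa m v) ≤ 0 := by
      apply key0
      intro ε hε
      obtain ⟨n₁, hn₁, hd₁⟩ := happrox u (ε/2) (by linarith)
      obtain ⟨n₂, hn₂, hd₂⟩ := happrox v (ε/2) (by linarith)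
      set n := max n₁ n₂ with hn
      have hun : |u| < 2 ^ n := lt_of_lt_of_le hn₁ (pow_le_pow_right₀ one_le_two (le_max_left _ _))
      have hvn : |v| < 2 ^ n := lt_of_lt_of_le hn₂ (pow_le_pow_right₀ one_le_two (le_max_right _ _))
      have huv : |u + v| < 2 ^ (n+1) := by
        calc |u + v| ≤ |u| + |v| := abs_add_le u v
          _ < 2^n + 2^n := by linarith
          _ = 2^(n+1) := by rw [pow_succ]; ring
      have k1 : aa m (u+v) ≤ dd m (n+1) (u+v) := hle _ _ huv
      have k2 := hstep2 u v n hun hvn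
      have k3 : dd m n u ≤ dd m n₁ u := hmono u n₁ n (le_max_left _ _) (hadm u n₁ hn₁)
      have k4 : dd m n v ≤ dd m n₂ v := hmono v n₂ n (le_max_right _ _) (hadm v n₂ hn₂)
      linarith
    linarith
  have hneg : ∀ u : ℝ, aa m u + aa m (-u) ≤ 0 := by
    intro u
    apply key0
    intro ε hε
    obtain ⟨N₁, hN₁⟩ := pow_unbounded_of_one_lt |u| one_lt_two
    obtain ⟨N₂, hN₂⟩ := pow_unbounded_of_one_lt |u^2| one_lt_two
    set N := max N₁ N₂ with hNdef
    have hNu : |u| < 2 ^ N := lt_of_lt_of_le hN₁ (pow_le_pow_right₀ one_le_two (le_max_left _ _))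
    have hNuu : |u^2| < 2 ^ N := lt_of_lt_of_le hN₂ (pow_le_pow_right₀ one_le_two (le_max_right _ _))
    set K := |dd m N u| + |dd m N (-u)| with hK
    set C := |dd m N (-(u^2))| + K * K with hC
    have hC0 : 0 ≤ C := by positivity
    obtain ⟨n₀, hn₀⟩ := pow_unbounded_of_one_lt (C / ε) one_lt_two
    set n := max N n₀ with hndef
    have hnu : |u| < 2 ^ n := lt_of_lt_of_le hNu (pow_le_pow_right₀ one_le_two (le_max_left _ _))
    have hnuu : |u^2| < 2 ^ n := lt_of_lt_of_le hNuu (pow_le_pow_right₀ one_le_two (le_max_left _ _))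
    have hnu' : |(-u)| < 2 ^ n := by rwa [abs_neg]
    have hNu' : |(-u)| < 2 ^ N := by rwa [abs_neg]
    have hNw : |(-(u^2))| < 2 ^ N := by rw [abs_neg]; exact hNuu
    have hnw : |(-(u^2))| < 2 ^ n := by rw [abs_neg]; exact hnuu
    -- bounds
    have b1 : dd m n u ≤ dd m N u := hmono u N n (le_max_left _ _) (hadm u N hNu)
    have b2 : dd m n (-u) ≤ dd m N (-u) := hmono (-u) N n (le_max_left _ _) (hadm (-u) N hNu')
    have b3 : 0 ≤ dd m n u + dd m n (-u) := hpair u n hnu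
    have b5 : dd m n (-(u^2)) ≤ dd m N (-(u^2)) :=
      hmono (-(u^2)) N n (le_max_left _ _) (hadm (-(u^2)) N hNw)
    have k1 : |dd m n u| ≤ K := by
      rw [abs_le]
      constructor
      · have h' : dd m N (-u) ≤ |dd m N (-u)| := le_abs_self _
        have h'' : (0:ℝ) ≤ |dd m N u| := abs_nonneg _
        rw [hK]; linarith
      · have h' : dd m N u ≤ |dd m N u| := le_abs_self _
        have h'' : (0:ℝ) ≤ |dd m N (-u)| := abs_nonneg _
        rw [hK]; linarith
    have k2 : |dd m n (-u)| ≤ K := by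
      rw [abs_le]
      constructor
      · have h' : dd m N u ≤ |dd m N u| := le_abs_self _
        have h'' : (0:ℝ) ≤ |dd m N (-u)| := abs_nonneg _
        rw [hK]; linarith
      · have h' : dd m N (-u) ≤ |dd m N (-u)| := le_abs_self _
        have h'' : (0:ℝ) ≤ |dd m N u| := abs_nonneg _
        rw [hK]; linarith
    have kP : -(dd m n u * dd m n (-u)) ≤ K * K := by
      have h' : |dd m n u * dd m n (-u)| ≤ K * K := by
        rw [abs_mul]
        exact mul_le_mul k1 k2 (abs_nonneg _) ((abs_nonneg _).trans k1)
      calc -(dd m n u * dd m n (-u)) ≤ |dd m n u * dd m n (-u)| := neg_le_abs _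
        _ ≤ K * K := h'
    -- core multiplicativity computation
    have hx := hadm u n hnu
    have hy := hadm (-u) n hnu'
    have hw : 0 < 1 + (-(u^2)) / 2 ^ n := hadm (-(u^2)) n hnw
    have hprod := hmul (1 + u / 2 ^ n) hx (1 + (-u) / 2 ^ n) hy
    have hxy : (1 + u / 2 ^ n) * (1 + (-u) / 2 ^ n) = 1 + ((-(u^2)) / 2 ^ n) / 2 ^ n := by
      field_simp; ring
    have hFd' := hFd n ((-(u^2)) / 2 ^ n) hw
    rw [← hxy, hprod] at hFd'
    -- hFd' : m (1+u/2^n) * m (1+(-u)/2^n) ≤ 1 + (m (1 + -(u^2)/2^n) - 1) / 2^n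
    have key : 2 ^ n * (m (1 + u / 2 ^ n) * m (1 + (-u) / 2 ^ n))
        ≤ 2 ^ n + (m (1 + (-(u^2)) / 2 ^ n) - 1) := by
      have h' := mul_le_mul_of_nonneg_left hFd' (p2 n).le
      have e3 : (2:ℝ) ^ n * (1 + (m (1 + (-(u^2)) / 2 ^ n) - 1) / 2 ^ n)
          = 2 ^ n + (m (1 + (-(u^2)) / 2 ^ n) - 1) := by
        field_simp
      linarith [h', e3.le, e3.ge]
    have main : 2 ^ n * (dd m n u + dd m n (-u))
        ≤ dd m n (-(u^2)) - dd m n u * dd m n (-u) := by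
      have h2 := mul_le_mul_of_nonneg_left key (p2 n).le
      unfold dd
      linarith [h2]
    have hfin : dd m n u + dd m n (-u) ≤ C / 2 ^ n := by
      rw [le_div_iff₀ (p2 n)]
      have e1 : dd m n (-(u^2)) ≤ |dd m N (-(u^2))| := b5.trans (le_abs_self _)
      rw [hC]
      linarith [main, kP, e1]
    have hCe : C / 2 ^ n < ε := by
      have h2n : C / ε < 2 ^ n := lt_of_lt_of_le hn₀ (pow_le_pow_right₀ one_le_two (le_max_right _ _))
      rw [div_lt_iff₀ (p2 n)]
      rw [div_lt_iff₀ hε] at h2n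
      linarith
    have l1 : aa m u ≤ dd m n u := hle u n hnu
    have l2 : aa m (-u) ≤ dd m n (-u) := hle (-u) n hnu'
    linarith
  have haddfull : ∀ u v : ℝ, aa m (u + v) = aa m u + aa m v := by
    intro u v
    have h3 := hsub (u + v) (-v)
    have e : u + v + -v = u := by ring
    rw [e] at h3
    have h4 := hneg v
    have h5 : aa m 0 ≤ aa m v + aa m (-v) := by
      have := hsub v (-v)
      simpa using this
    rw [hzero] at h5
    have h6 := hsub u v
    -- aa (-v) = - aa v
    have h7 : aa m (-v) = - aa m v := by linarith
    rw [h7] at h3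
    linarith
  refine ⟨aa m, haddfull, ?_⟩
  intro t ht
  obtain ⟨n, hn⟩ := pow_unbounded_of_one_lt |t - 1| one_lt_two
  have l1 : aa m (t-1) ≤ dd m n (t-1) := hle _ _ hn
  have l2 : dd m n (t-1) ≤ dd m 0 (t-1) := by
    apply hmono (t-1) 0 n (Nat.zero_le n)
    rw [pow_zero, div_one]
    linarith
  have e : dd m 0 (t-1) = m t - 1 := by
    unfold dd
    rw [pow_zero, div_one, one_mul]
    have e2 : (1:ℝ) + (t - 1) = t := by ring
    rw [e2]
  linarith
end

section
/- If m : (0,∞) → (0,∞) is multiplicative and there is an additive a : ℝ → ℝ with m(t) ≥ 1 + a(t−1) for all t > 0, then for all x,y > 0 one has m(2x/(x+y)) + m(2y/(x+y)) ≥ 2, and consequently m(x) + m(y) ≥ 2 m((x+y)/2). -/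
theorem stmt_16 (m : ℝ → ℝ) (hm : ∀ x > 0, 0 < m x)
    (hmul : ∀ x > 0, ∀ y > 0, m (x * y) = m x * m y)
    (a : ℝ → ℝ) (haadd : ∀ u v : ℝ, a (u + v) = a u + a v)
    (hsupp : ∀ t > 0, 1 + a (t - 1) ≤ m t) :
    ∀ x > 0, ∀ y > 0,
      2 ≤ m (2 * x / (x + y)) + m (2 * y / (x + y)) ∧
      2 * m ((x + y) / 2) ≤ m x + m y := by
  intro x hx y hy
  have hxy : 0 < x + y := by linarith
  have ha0 : a 0 = 0 := by have := haadd 0 0; simpa using this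
  have hu : (0:ℝ) < 2 * x / (x + y) := by positivity
  have hv : (0:ℝ) < 2 * y / (x + y) := by positivity
  have hsum : (2 * x / (x + y) - 1) + (2 * y / (x + y) - 1) = 0 := by
    field_simp
    ring
  have key : 2 ≤ m (2 * x / (x + y)) + m (2 * y / (x + y)) := by
    have h1 := hsupp _ hu
    have h2 := hsupp _ hv
    have := haadd (2 * x / (x + y) - 1) (2 * y / (x + y) - 1)
    rw [hsum, ha0] at this
    linarith
  refine ⟨key, ?_⟩
  have hh : (0:ℝ) < (x + y) / 2 := by positivity
  have hx' : m x = m ((x + y) / 2) * m (2 * x / (x + y)) := by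
    have : (x + y) / 2 * (2 * x / (x + y)) = x := by field_simp
    rw [← hmul _ hh _ hu, this]
  have hy' : m y = m ((x + y) / 2) * m (2 * y / (x + y)) := by
    have : (x + y) / 2 * (2 * y / (x + y)) = y := by field_simp
    rw [← hmul _ hh _ hv, this]
  have hmpos := hm _ hh
  rw [hx', hy']
  nlinarith
end
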